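/- arXiv:2505.00645 — 2 statements merged into one kernel-verified Lean document; each statement's English description precedes it below -/
import Mathlib

section
/- The element J = Σ_{k=0}^{n-1} e_k ⊗ x^k = (1/n) Σ_{i,j=0}^{n-1} q^{-ij} x^i ⊗ x^j in K[Z_n] ⊗ K[Z_n] is a twist, i.e., it is invertible, satisfies (Δ ⊗ id)(J)(J ⊗ 1) = (id ⊗ Δ)(J)(1 ⊗ J), and (ε ⊗ id)(J) = 1 = (id ⊗ ε)(J). -/
set_option linter.unusedSectionVars false

open MonoidAlgebra Finset
open scoped TensorProduct

noncomputable section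

variable (K : Type*) [CommRing K] (G : Type*) [CommGroup G]

namespace GroupBialgebra

instance instCoalgebra : Coalgebra K (MonoidAlgebra K G) :=
  inferInstanceAs (Coalgebra K (MonoidAlgebra K G))

variable {K G}

lemma comul_single (g : G) (c : K) :
    Coalgebra.comul (R := K) (MonoidAlgebra.single g c) =
      MonoidAlgebra.single g (1 : K) ⊗ₜ[K] MonoidAlgebra.single g c := by
  have h := MonoidAlgebra.comul_single (R := K) g c
  simp only [CommSemiring.comul_apply, TensorProduct.map_tmul, MonoidAlgebra.lsingle_apply] at h
  exact h

lemma counit_single (g : G) (c : K) :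
    Coalgebra.counit (R := K) (MonoidAlgebra.single g c) = c := by
  have h := MonoidAlgebra.counit_single (R := K) g c
  simp only [CommSemiring.counit_apply] at h
  exact h

variable (K G)

instance instBialgebra : Bialgebra K (MonoidAlgebra K G) :=
  Bialgebra.mk' K (MonoidAlgebra K G)
    (by simpa [MonoidAlgebra.one_def] using counit_single (1 : G) (1 : K))
    (fun {a b} => by
      induction a using MonoidAlgebra.induction_linear with
      | zero => simp
      | add f h hf hh => simp [add_mul, hf, hh]
      | single g c =>
        induction b using MonoidAlgebra.induction_linear with
        | zero => simp
        | add f h hf hh => simp [mul_add, hf, hh]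
        | single h d =>
          simp only [MonoidAlgebra.single_mul_single, counit_single])
    (by simpa [MonoidAlgebra.one_def, Algebra.TensorProduct.one_def] using comul_single (1 : G) (1 : K))
    (fun {a b} => by
      induction a using MonoidAlgebra.induction_linear with
      | zero => simp
      | add f h hf hh => simp [add_mul, hf, hh]
      | single g c =>
        induction b using MonoidAlgebra.induction_linear with
        | zero => simp
        | add f h hf hh => simp [mul_add, hf, hh]
        | single h d =>
          simp only [MonoidAlgebra.single_mul_single, comul_single,
            Algebra.TensorProduct.tmul_mul_tmul, one_mul])

end GroupBialgebra

end

noncomputable section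

/-- The group algebra `K[Z_n]` of the cyclic group of order `n`. -/
abbrev GroupAlgZn (K : Type*) [CommRing K] (n : ℕ) : Type _ :=
  MonoidAlgebra K (Multiplicative (ZMod n))

/-- The canonical generator `x` of the group algebra `K[Z_n]`. -/
def xgen (K : Type*) [CommRing K] (n : ℕ) : GroupAlgZn K n :=
  MonoidAlgebra.of K (Multiplicative (ZMod n)) (Multiplicative.ofAdd (1 : ZMod n))

/-- The idempotent `e_k = (1/n) ∑_{i=0}^{n-1} q^{-ik} x^i` in `K[Z_n]`. -/
def eIdem (K : Type*) [Field K] (n : ℕ) (q : K) (k : ZMod n) : GroupAlgZn K n :=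
  (n : K)⁻¹ • ∑ i ∈ Finset.range n, (q ^ (i * k.val))⁻¹ • (xgen K n) ^ i

/-- `J ∈ R ⊗ R` is a twist for the bialgebra `R`: it is invertible, satisfies the twist
(2-cocycle) equation `(Δ ⊗ id)(J)(J ⊗ 1) = (id ⊗ Δ)(J)(1 ⊗ J)`, and
`(ε ⊗ id)(J) = 1 = (id ⊗ ε)(J)`. -/
def IsTwist (K : Type*) [CommRing K] (R : Type*) [Ring R] [Bialgebra K R]
    (J : R ⊗[K] R) : Prop :=
  IsUnit J ∧
  (TensorProduct.assoc K R R R)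
      ((LinearMap.rTensor R (Coalgebra.comul (R := K))) J * (J ⊗ₜ[K] (1 : R))) =
    (LinearMap.lTensor R (Coalgebra.comul (R := K))) J * ((1 : R) ⊗ₜ[K] J) ∧
  (TensorProduct.lid K R) ((LinearMap.rTensor R (Coalgebra.counit (R := K))) J) = 1 ∧
  (TensorProduct.rid K R) ((LinearMap.lTensor R (Coalgebra.counit (R := K))) J) = 1

/-! The primitive root `q` gives the character `ψ a = q ^ a` of `ZMod n`, and
`e_k = n⁻¹ ∑_g ψ (-(g k)) x^g` are the Fourier idempotents of `K[ZMod n]`. Orthogonality of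
characters shows that they are orthogonal idempotents summing to `1`, with `x^g e_k = q^{gk} e_k`,
`ε e_k = δ_{k,0}` and `Δ e_k = ∑_{a + b = k} e_a ⊗ e_b`. For any such family and any group-like
character `a ↦ x^a` commuting with it, `J = ∑_k e_k ⊗ x^k` is a twist: `∑_k e_k ⊗ x^{-k}` inverts it,
and both sides of the cocycle equation equal `∑_{a,b} e_a ⊗ (e_b x^a ⊗ x^{a+b})`. -/

section TwistOfIdempotents

open TensorProduct

variable {R H A : Type*} [CommRing R] [Ring H] [Bialgebra R H]
  [AddCommGroup A] [Fintype A] [DecidableEq A] {e : A → H} {x : AddChar A H}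

theorem sum_tmul_mul_sum_tmul (he_mul : ∀ a b, e a * e b = if a = b then e a else 0)
    (y z : A → H) :
    (∑ a, e a ⊗ₜ[R] y a) * (∑ b, e b ⊗ₜ[R] z b) = ∑ a, e a ⊗ₜ[R] (y a * z a) := by
  simp only [Finset.sum_mul_sum, Algebra.TensorProduct.tmul_mul_tmul, he_mul, ite_tmul,
    Finset.sum_ite_eq, Finset.mem_univ, if_true]

theorem isUnit_sum_tmul (he_mul : ∀ a b, e a * e b = if a = b then e a else 0)
    (he_sum : ∑ a, e a = 1) : IsUnit (∑ a, e a ⊗ₜ[R] x a) := by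
  refine (Units.mk (∑ a, e a ⊗ₜ[R] x a) (∑ b, e b ⊗ₜ[R] x (-b)) ?_ ?_).isUnit <;>
    simp only [sum_tmul_mul_sum_tmul he_mul, ← AddChar.map_add_eq_mul, add_neg_cancel,
      neg_add_cancel, AddChar.map_zero_eq_one, ← sum_tmul, he_sum, Algebra.TensorProduct.one_def]

theorem lid_rTensor_counit_sum_tmul
    (he_counit : ∀ a, Coalgebra.counit (R := R) (e a) = if a = 0 then 1 else 0) :
    TensorProduct.lid R H
      (LinearMap.rTensor H (Coalgebra.counit (R := R)) (∑ a, e a ⊗ₜ[R] x a)) = 1 := by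
  simp [he_counit]

theorem rid_lTensor_counit_sum_tmul (hx_counit : ∀ a, Coalgebra.counit (R := R) (x a) = 1)
    (he_sum : ∑ a, e a = 1) :
    TensorProduct.rid R H
      (LinearMap.lTensor H (Coalgebra.counit (R := R)) (∑ a, e a ⊗ₜ[R] x a)) = 1 := by
  simp [hx_counit, he_sum]

theorem assoc_rTensor_comul_sum_tmul_mul
    (he_mul : ∀ a b, e a * e b = if a = b then e a else 0)
    (he_comul : ∀ k, Coalgebra.comul (R := R) (e k) = ∑ a, e a ⊗ₜ[R] e (k - a)) :
    TensorProduct.assoc R H H H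
        (LinearMap.rTensor H (Coalgebra.comul (R := R)) (∑ a, e a ⊗ₜ[R] x a)
          * ((∑ a, e a ⊗ₜ[R] x a) ⊗ₜ[R] (1 : H))) =
      ∑ a, ∑ b, e a ⊗ₜ[R] ((e b * x a) ⊗ₜ[R] x (a + b)) := by
  have hΔ : LinearMap.rTensor H (Coalgebra.comul (R := R)) (∑ a, e a ⊗ₜ[R] x a) =
      ∑ k, ∑ a, (e a ⊗ₜ[R] e (k - a)) ⊗ₜ[R] x k := by
    simp only [map_sum, LinearMap.rTensor_tmul, he_comul, sum_tmul]
  rw [hΔ, sum_tmul]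
  simp only [Finset.sum_mul, Finset.mul_sum, Algebra.TensorProduct.tmul_mul_tmul, mul_one,
    map_sum, TensorProduct.assoc_tmul]
  simp only [he_mul, ite_tmul, Finset.sum_ite_eq', Finset.mem_univ, if_true]
  refine Finset.sum_congr rfl fun a _ =>
    (Fintype.sum_equiv (Equiv.addLeft a) _ _ fun b => ?_).symm
  simp

theorem lTensor_comul_sum_tmul_mul
    (hx_comul : ∀ a, Coalgebra.comul (R := R) (x a) = x a ⊗ₜ[R] x a)
    (hcomm : ∀ a b, Commute (x a) (e b)) :
    LinearMap.lTensor H (Coalgebra.comul (R := R)) (∑ a, e a ⊗ₜ[R] x a)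
        * ((1 : H) ⊗ₜ[R] (∑ a, e a ⊗ₜ[R] x a)) =
      ∑ a, ∑ b, e a ⊗ₜ[R] ((e b * x a) ⊗ₜ[R] x (a + b)) := by
  simp only [map_sum, LinearMap.lTensor_tmul, hx_comul, tmul_sum, Finset.sum_mul, Finset.mul_sum,
    Algebra.TensorProduct.tmul_mul_tmul, mul_one, (hcomm _ _).eq, AddChar.map_add_eq_mul]
  exact Finset.sum_comm

theorem isTwist_sum_tmul (he_mul : ∀ a b, e a * e b = if a = b then e a else 0)
    (he_sum : ∑ a, e a = 1)
    (he_comul : ∀ k, Coalgebra.comul (R := R) (e k) = ∑ a, e a ⊗ₜ[R] e (k - a))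
    (he_counit : ∀ k, Coalgebra.counit (R := R) (e k) = if k = 0 then 1 else 0)
    (hx_comul : ∀ a, Coalgebra.comul (R := R) (x a) = x a ⊗ₜ[R] x a)
    (hx_counit : ∀ a, Coalgebra.counit (R := R) (x a) = 1)
    (hcomm : ∀ a b, Commute (x a) (e b)) :
    IsTwist R H (∑ a, e a ⊗ₜ[R] x a) :=
  ⟨isUnit_sum_tmul he_mul he_sum,
    (assoc_rTensor_comul_sum_tmul_mul he_mul he_comul).trans
      (lTensor_comul_sum_tmul_mul hx_comul hcomm).symm,
    lid_rTensor_counit_sum_tmul he_counit, rid_lTensor_counit_sum_tmul hx_counit he_sum⟩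

end TwistOfIdempotents

namespace MonoidAlgebra

open TensorProduct

def ofAddChar (K A : Type*) [CommSemiring K] [AddMonoid A] :
    AddChar A (MonoidAlgebra K (Multiplicative A)) :=
  AddChar.toMonoidHomEquiv.symm (of K (Multiplicative A))

section GroupLike

variable {K A : Type*} [CommRing K] [AddCommGroup A]

theorem comul_ofAddChar (a : A) :
    Coalgebra.comul (R := K) (ofAddChar K A a) = ofAddChar K A a ⊗ₜ[K] ofAddChar K A a :=
  GroupBialgebra.comul_single _ _

theorem counit_ofAddChar (a : A) : Coalgebra.counit (R := K) (ofAddChar K A a) = 1 :=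
  GroupBialgebra.counit_single _ _

end GroupLike

section Fourier

variable {K R : Type*} [Field K] [CommRing R] [Fintype R] (ψ : AddChar R K)

def fourierIdem (k : R) : MonoidAlgebra K (Multiplicative R) :=
  (Fintype.card R : K)⁻¹ • ∑ g, ψ (-(g * k)) • ofAddChar K R g

theorem ofAddChar_mul_fourierIdem (m k : R) :
    ofAddChar K R m * fourierIdem ψ k = ψ (m * k) • fourierIdem ψ k := by
  rw [fourierIdem, mul_smul_comm, smul_comm (ψ _)]
  congr 1
  rw [Finset.mul_sum, Finset.smul_sum]
  refine Fintype.sum_equiv (Equiv.addLeft m) _ _ fun g => ?_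
  rw [Equiv.coe_addLeft, mul_smul_comm, ← AddChar.map_add_eq_mul, smul_smul,
    ← AddChar.map_add_eq_mul]
  ring_nf

theorem sum_fourierIdem_tmul_ofAddChar :
    ∑ k, fourierIdem ψ k ⊗ₜ[K] ofAddChar K R k =
      (Fintype.card R : K)⁻¹ •
        ∑ g, ∑ h, ψ (-(g * h)) • (ofAddChar K R g ⊗ₜ[K] ofAddChar K R h) := by
  simp only [fourierIdem, smul_tmul', sum_tmul, Finset.smul_sum]
  exact Finset.sum_comm

variable [DecidableEq R] {ψ}

theorem inv_card_mul_sum_apply_mul (hψ : ψ.IsPrimitive) (hR : (Fintype.card R : K) ≠ 0) (t : R) :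
    (Fintype.card R : K)⁻¹ * ∑ g, ψ (g * t) = if t = 0 then 1 else 0 := by
  rw [AddChar.sum_mulShift t hψ]
  split_ifs <;> simp [hR]

theorem fourierIdem_mul_fourierIdem (hψ : ψ.IsPrimitive) (hR : (Fintype.card R : K) ≠ 0)
    (a b : R) : fourierIdem ψ a * fourierIdem ψ b = if a = b then fourierIdem ψ a else 0 := by
  have hψab (g : R) : ψ (-(g * a)) * ψ (g * b) = ψ (g * (b - a)) := by
    rw [← AddChar.map_add_eq_mul]
    ring_nf
  conv_lhs => rw [fourierIdem]
  simp only [smul_mul_assoc, Finset.sum_mul, ofAddChar_mul_fourierIdem, smul_smul, hψab,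
    ← Finset.sum_smul, inv_card_mul_sum_apply_mul hψ hR, sub_eq_zero, eq_comm (a := b)]
  split_ifs with hab <;> simp [hab]

theorem sum_fourierIdem (hψ : ψ.IsPrimitive) (hR : (Fintype.card R : K) ≠ 0) :
    ∑ k, fourierIdem ψ k = 1 := by
  have hneg (g k : R) : -(g * k) = k * -g := by ring
  simp only [fourierIdem, Finset.smul_sum, smul_smul]
  rw [Finset.sum_comm]
  simp only [← Finset.sum_smul, ← Finset.mul_sum, hneg, inv_card_mul_sum_apply_mul hψ hR,
    neg_eq_zero, ite_smul, one_smul, zero_smul, Finset.sum_ite_eq', Finset.mem_univ, if_true,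
    AddChar.map_zero_eq_one]

theorem ofAddChar_eq_sum_smul_fourierIdem (hψ : ψ.IsPrimitive)
    (hR : (Fintype.card R : K) ≠ 0) (g : R) :
    ofAddChar K R g = ∑ k, ψ (g * k) • fourierIdem ψ k := by
  simp only [← ofAddChar_mul_fourierIdem, ← Finset.mul_sum, sum_fourierIdem hψ hR, mul_one]

theorem counit_fourierIdem (hψ : ψ.IsPrimitive) (hR : (Fintype.card R : K) ≠ 0) (k : R) :
    Coalgebra.counit (R := K) (fourierIdem ψ k) = if k = 0 then 1 else 0 := by
  have hneg (g : R) : -(g * k) = g * -k := by ring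
  simp only [fourierIdem, map_smul, map_sum, counit_ofAddChar, smul_eq_mul, mul_one, hneg,
    inv_card_mul_sum_apply_mul hψ hR, neg_eq_zero]

theorem comul_fourierIdem (hψ : ψ.IsPrimitive) (hR : (Fintype.card R : K) ≠ 0) (k : R) :
    Coalgebra.comul (R := K) (fourierIdem ψ k) =
      ∑ a, fourierIdem ψ a ⊗ₜ[K] fourierIdem ψ (k - a) := by
  have hx (g : R) : ofAddChar K R g ⊗ₜ[K] ofAddChar K R g =
      ∑ a, ∑ b, (ψ (g * a) * ψ (g * b)) • (fourierIdem ψ a ⊗ₜ[K] fourierIdem ψ b) := by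
    simp only [ofAddChar_eq_sum_smul_fourierIdem hψ hR g, sum_tmul, tmul_sum, smul_tmul_smul]
    exact Finset.sum_comm
  have hψab (g a b : R) :
      ψ (-(g * k)) * (ψ (g * a) * ψ (g * b)) = ψ (g * (b - (k - a))) := by
    simp only [← AddChar.map_add_eq_mul]
    ring_nf
  conv_lhs => rw [fourierIdem]
  simp only [map_smul, map_sum, comul_ofAddChar, hx, Finset.smul_sum, smul_smul, mul_assoc, hψab]
  rw [Finset.sum_comm]
  refine Finset.sum_congr rfl fun a _ => ?_
  rw [Finset.sum_comm]
  simp only [← Finset.sum_smul, ← Finset.mul_sum, inv_card_mul_sum_apply_mul hψ hR, sub_eq_zero,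
    ite_smul, one_smul, zero_smul, Finset.sum_ite_eq', Finset.mem_univ, if_true]

theorem isTwist_sum_fourierIdem_tmul_ofAddChar (hψ : ψ.IsPrimitive)
    (hR : (Fintype.card R : K) ≠ 0) :
    IsTwist K (MonoidAlgebra K (Multiplicative R))
      (∑ k, fourierIdem ψ k ⊗ₜ[K] ofAddChar K R k) :=
  isTwist_sum_tmul (fourierIdem_mul_fourierIdem hψ hR) (sum_fourierIdem hψ hR)
    (comul_fourierIdem hψ hR) (counit_fourierIdem hψ hR) comul_ofAddChar counit_ofAddChar
    fun _ _ => Commute.all _ _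

end Fourier

end MonoidAlgebra

theorem ZMod.sum_range_natCast {M : Type*} [AddCommMonoid M] (n : ℕ) [NeZero n]
    (f : ZMod n → M) : ∑ i ∈ Finset.range n, f i = ∑ g : ZMod n, f g :=
  Finset.sum_nbij' (fun i => i) ZMod.val (fun _ _ => Finset.mem_univ _)
    (fun g _ => Finset.mem_range.mpr g.val_lt)
    (fun _ hi => ZMod.val_cast_of_lt (Finset.mem_range.mp hi))
    (fun g _ => ZMod.natCast_zmod_val g) fun _ _ => rfl

section CyclicGroupAlgebra

open MonoidAlgebra

theorem xgen_pow (K : Type*) [CommRing K] (n i : ℕ) : xgen K n ^ i = ofAddChar K (ZMod n) i := by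
  rw [← nsmul_one, AddChar.map_nsmul_eq_pow]
  rfl

variable {K : Type*} [Field K] {n : ℕ} [NeZero n] {q : K}

theorem zmodChar_neg_natCast_mul (hq : q ^ n = 1) (i j : ℕ) :
    AddChar.zmodChar n hq (-((i : ZMod n) * j)) = (q ^ (i * j))⁻¹ := by
  rw [AddChar.map_neg_eq_inv, ← Nat.cast_mul, AddChar.zmodChar_apply']

theorem eIdem_eq_fourierIdem (hq : q ^ n = 1) (k : ZMod n) :
    eIdem K n q k = fourierIdem (AddChar.zmodChar n hq) k := by
  rw [eIdem, fourierIdem, ZMod.card, ← ZMod.sum_range_natCast]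
  refine congrArg _ (Finset.sum_congr rfl fun i _ => ?_)
  rw [xgen_pow, ← zmodChar_neg_natCast_mul hq, ZMod.natCast_zmod_val]

end CyclicGroupAlgebra

theorem J_isTwist_general (K : Type*) [Field K] (n : ℕ) (hn : 2 ≤ n)
    (q : K) (hq : IsPrimitiveRoot q n) :
    let J : GroupAlgZn K n ⊗[K] GroupAlgZn K n :=
      ∑ k ∈ Finset.range n, eIdem K n q ((k : ℕ) : ZMod n) ⊗ₜ[K] ((xgen K n) ^ k)
    J = (n : K)⁻¹ • ∑ i ∈ Finset.range n, ∑ j ∈ Finset.range n,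
          (q ^ (i * j))⁻¹ • (((xgen K n) ^ i) ⊗ₜ[K] ((xgen K n) ^ j)) ∧
    IsTwist K (GroupAlgZn K n) J := by
  intro J
  have : NeZero n := ⟨by omega⟩
  have hq1 := hq.pow_eq_one
  have hJ : J = ∑ k, fourierIdem (AddChar.zmodChar n hq1) k ⊗ₜ[K] ofAddChar K (ZMod n) k := by
    rw [← ZMod.sum_range_natCast n]
    simp only [J, eIdem_eq_fourierIdem hq1, xgen_pow]
  have hcard : (Fintype.card (ZMod n) : K) ≠ 0 := by
    rw [ZMod.card]
    exact hq.neZero'.out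
  refine ⟨?_, ?_⟩
  · rw [hJ, sum_fourierIdem_tmul_ofAddChar, ZMod.card, ← ZMod.sum_range_natCast n]
    simp only [xgen_pow, ← zmodChar_neg_natCast_mul hq1, ← ZMod.sum_range_natCast n]
  · exact hJ ▸ isTwist_sum_fourierIdem_tmul_ofAddChar
      (AddChar.zmodChar_primitive_of_primitive_root n hq) hcard

/-- `J = ∑_k e_k ⊗ x^k = (1/n) ∑_{i,j} q^{-ij} x^i ⊗ x^j` is a twist for `K[Z_n]`. -/
theorem J_isTwist (K : Type*) [Field K] [CharZero K] (n : ℕ) (hn : 2 ≤ n)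
    (q : K) (hq : IsPrimitiveRoot q n) :
    let J : GroupAlgZn K n ⊗[K] GroupAlgZn K n :=
      ∑ k ∈ Finset.range n, eIdem K n q ((k : ℕ) : ZMod n) ⊗ₜ[K] ((xgen K n) ^ k)
    J = (n : K)⁻¹ • ∑ i ∈ Finset.range n, ∑ j ∈ Finset.range n,
          (q ^ (i * j))⁻¹ • (((xgen K n) ^ i) ⊗ₜ[K] ((xgen K n) ^ j)) ∧
    IsTwist K (GroupAlgZn K n) J :=
  J_isTwist_general K n hn q hq
end
end

section
/- For a primitive n-th root of unity q and integers a ≢ b (mod n), the m-dimensional representation V_{a,b} of H_{n,m} defined by the matrices X_i and Z_k is irreducible: any nonzero invariant subspace of K^m under the algebra generated by the X_i and Z_k is all of K^m. -/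
noncomputable section

/-- The matrix `Z_k` (`0`-indexed block position `k`): it agrees with `p^{b²}` times the
identity except in rows/columns `k, k+1`, where it has the `2×2` block `[[0,1],[q^{ab},0]]`. -/
def Zmat (K : Type*) [Field K] (q p : K) (a b m k : ℕ) : Matrix (Fin m) (Fin m) K :=
  Matrix.of fun i j =>
    if (i : ℕ) = k ∧ (j : ℕ) = k + 1 then 1
    else if (i : ℕ) = k + 1 ∧ (j : ℕ) = k then q ^ (a * b)
    else if i = j ∧ (i : ℕ) ≠ k ∧ (i : ℕ) ≠ k + 1 then p ^ (b ^ 2)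
    else 0

/-- The diagonal matrix `X_{i₀}` with `q^a` at position `i₀` and `q^b` elsewhere. -/
def Xmat (K : Type*) [Field K] (q : K) (a b m i₀ : ℕ) : Matrix (Fin m) (Fin m) K :=
  Matrix.diagonal fun i => if (i : ℕ) = i₀ then q ^ a else q ^ b

/-- for `a ≢ b (mod n)`, the representation `V_{a,b}` of `H_{n,m}` on `K^m`
given by the matrices `X_i` and `Z_k` is irreducible: any nonzero subspace of `K^m` invariant
under all the `X_i` and `Z_k` is all of `K^m`. -/
theorem Vab_irreducible (K : Type*) [Field K] [CharZero K] (n : ℕ) (hn : 2 ≤ n)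
    (q p : K) (hq : IsPrimitiveRoot q n) (hp : p ^ 2 = q) (a b m : ℕ) (hm : 2 ≤ m)
    (hab : ((a : ZMod n) ≠ (b : ZMod n)))
    (W : Submodule K (Fin m → K))
    (hX : ∀ i : ℕ, i < m → ∀ v ∈ W, (Xmat K q a b m i).mulVec v ∈ W)
    (hZ : ∀ k : ℕ, k + 1 < m → ∀ v ∈ W, (Zmat K q p a b m k).mulVec v ∈ W)
    (hW : W ≠ ⊥) :
    W = ⊤ := by
  classical
  have hn0 : n ≠ 0 := by omega
  have hq0 : q ≠ 0 := hq.ne_zero hn0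
  have hqab : (q : K) ^ a ≠ q ^ b := by
    intro h
    apply hab
    rw [ZMod.natCast_eq_natCast_iff]
    have hmod : ∀ c : ℕ, q ^ c = q ^ (c % n) := fun c => by
      conv_lhs => rw [← Nat.div_add_mod c n]
      rw [pow_add, pow_mul, hq.pow_eq_one, one_pow, one_mul]
    have h' : q ^ (a % n) = q ^ (b % n) := by rw [← hmod, ← hmod]; exact h
    exact hq.pow_inj (Nat.mod_lt _ (by omega)) (Nat.mod_lt _ (by omega)) h'
  -- Step 1: any nonzero vector in W gives a standard basis vector in W
  have hsingle : ∀ v ∈ W, ∀ j : Fin m, v j ≠ 0 → (Pi.single j (1 : K) : Fin m → K) ∈ W := by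
    intro v hv j hvj
    have hu : (Xmat K q a b m j).mulVec v - q ^ b • v ∈ W :=
      W.sub_mem (hX j j.isLt v hv) (W.smul_mem _ hv)
    have heq : (Xmat K q a b m j).mulVec v - q ^ b • v
        = ((q ^ a - q ^ b) * v j) • (Pi.single j (1 : K) : Fin m → K) := by
      funext i
      simp only [Xmat, Matrix.mulVec_diagonal, Pi.sub_apply, Pi.smul_apply, smul_eq_mul,
        Pi.single_apply]
      by_cases h : i = j
      · subst h; simp; ring
      · have : (i : ℕ) ≠ (j : ℕ) := fun hc => h (Fin.ext hc)
        simp [this, h]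
    have hc : ((q ^ a - q ^ b) * v j) ≠ 0 :=
      mul_ne_zero (sub_ne_zero.mpr hqab) hvj
    have : ((q ^ a - q ^ b) * v j)⁻¹ • (((q ^ a - q ^ b) * v j) • (Pi.single j (1 : K) : Fin m → K)) ∈ W :=
      W.smul_mem _ (heq ▸ hu)
    rwa [smul_smul, inv_mul_cancel₀ hc, one_smul] at this
  -- Step 2: adjacency moves
  have hfwd : ∀ k : ℕ, ∀ h : k + 1 < m,
      (Pi.single (⟨k, by omega⟩ : Fin m) (1 : K) : Fin m → K) ∈ W →
      (Pi.single (⟨k + 1, h⟩ : Fin m) (1 : K) : Fin m → K) ∈ W := by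
    intro k h hmem
    have hz := hZ k h _ hmem
    have heq : (Zmat K q p a b m k).mulVec ((Pi.single (⟨k, by omega⟩ : Fin m) (1 : K) : Fin m → K))
        = (q ^ (a * b)) • (Pi.single (⟨k + 1, h⟩ : Fin m) (1 : K) : Fin m → K) := by
      funext i
      simp only [Matrix.mulVec_single, mul_one, Zmat, Matrix.of_apply, Pi.smul_apply,
        smul_eq_mul, Pi.single_apply]
      by_cases hik : (i : ℕ) = k + 1
      · have : i = (⟨k + 1, h⟩ : Fin m) := Fin.ext hik
        simp [this, hik]
      · have hne : i ≠ (⟨k + 1, h⟩ : Fin m) := fun hc => hik (by rw [hc])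
        by_cases hik' : (i : ℕ) = k
        · simp [hik, hik', hne]
        · have : ¬ (i = (⟨k, by omega⟩ : Fin m)) := fun hc => hik' (by rw [hc])
          simp [hik, hik', hne, this]
      done
    rw [heq] at hz
    have hc : (q : K) ^ (a * b) ≠ 0 := pow_ne_zero _ hq0
    have := W.smul_mem ((q ^ (a * b))⁻¹) hz
    rwa [smul_smul, inv_mul_cancel₀ hc, one_smul] at this
  have hbwd : ∀ k : ℕ, ∀ h : k + 1 < m,
      (Pi.single (⟨k + 1, h⟩ : Fin m) (1 : K) : Fin m → K) ∈ W →
      (Pi.single (⟨k, by omega⟩ : Fin m) (1 : K) : Fin m → K) ∈ W := by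
    intro k h hmem
    have hz := hZ k h _ hmem
    have heq : (Zmat K q p a b m k).mulVec ((Pi.single (⟨k + 1, h⟩ : Fin m) (1 : K) : Fin m → K))
        = (Pi.single (⟨k, by omega⟩ : Fin m) (1 : K) : Fin m → K) := by
      funext i
      simp only [Matrix.mulVec_single, mul_one, Zmat, Matrix.of_apply, Pi.single_apply]
      by_cases hik : (i : ℕ) = k
      · have : i = (⟨k, by omega⟩ : Fin m) := Fin.ext hik
        simp [this, hik]
      · have hne : i ≠ (⟨k, by omega⟩ : Fin m) := fun hc => hik (by rw [hc])
        by_cases hik' : (i : ℕ) = k + 1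
        · have : ¬ (i = (⟨k + 1, h⟩ : Fin m) ∧ (i : ℕ) ≠ k + 1) := by simp [hik']
          simp [hik, hik', hne]
        · have : ¬ (i = (⟨k + 1, h⟩ : Fin m)) := fun hc => hik' (by rw [hc])
          simp [hik, hik', hne, this]
    rwa [heq] at hz
  -- Step 3: get one standard basis vector from hW
  obtain ⟨v, hvW, hv0⟩ : ∃ v ∈ W, v ≠ 0 := by
    by_contra hc
    push_neg at hc
    exact hW (le_bot_iff.mp fun v hv => hc v hv)
  obtain ⟨j₀, hj₀⟩ : ∃ j : Fin m, v j ≠ 0 := by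
    by_contra hc
    push_neg at hc
    exact hv0 (funext hc)
  have hj0mem : (Pi.single j₀ (1 : K) : Fin m → K) ∈ W := hsingle v hvW j₀ hj₀
  -- Step 4: propagate to index 0, then to all indices
  have h0m : 0 < m := by omega
  have hdown : ∀ t : ℕ, t ≤ (j₀ : ℕ) →
      (Pi.single (⟨(j₀ : ℕ) - t, by omega⟩ : Fin m) (1 : K) : Fin m → K) ∈ W := by
    intro t
    induction t with
    | zero => intro _; simpa using hj0mem
    | succ t ih =>
      intro ht
      have ht' : t ≤ (j₀ : ℕ) := by omega
      have hmem := ih ht'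
      have hk : ((j₀ : ℕ) - (t + 1)) + 1 < m := by omega
      have hrw : ((j₀ : ℕ) - (t + 1)) + 1 = (j₀ : ℕ) - t := by omega
      apply hbwd _ hk
      convert hmem using 2
      exact Fin.ext hrw
  have h0mem : (Pi.single (⟨0, h0m⟩ : Fin m) (1 : K) : Fin m → K) ∈ W := by
    have := hdown (j₀ : ℕ) le_rfl
    simpa using this
  have hall : ∀ k : ℕ, ∀ hk : k < m, (Pi.single (⟨k, hk⟩ : Fin m) (1 : K) : Fin m → K) ∈ W := by
    intro k
    induction k with
    | zero => intro hk; exact h0mem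
    | succ k ih =>
      intro hk
      exact hfwd k hk (ih (by omega))
  -- Step 5: conclude
  rw [eq_top_iff]
  intro v _
  have hrep : v = ∑ i : Fin m, v i • (Pi.single i (1 : K) : Fin m → K) := by
    funext j
    simp [Pi.single_apply, Finset.sum_ite_eq', eq_comm]
  rw [hrep]
  exact Submodule.sum_mem W fun i _ => W.smul_mem _ (hall i i.isLt)
end
end
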